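/- If a connected graph G = (V, E) possesses two completely independent spanning trees (a dual-CIST), then G is protectable; that is, for every destination vertex d ∈ V there exists a protection routing R_d for G. -/

import Mathlib

open SimpleGraph

def IsSpanningTreeOf {V : Type*} (G T : SimpleGraph V) : Prop :=
  T ≤ G ∧ T.IsTree

def InternallyDisjointPaths {V : Type*} (T₁ T₂ : SimpleGraph V) : Prop :=
  ∀ (x y : V) (p : T₁.Walk x y) (q : T₂.Walk x y),
    p.IsPath → q.IsPath → ∀ v, v ∈ p.support → v ∈ q.support → v = x ∨ v = y

def IsCISTFamily {V : Type*} (G : SimpleGraph V) {t : ℕ}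
    (T : Fin t → SimpleGraph V) : Prop :=
  (∀ i, IsSpanningTreeOf G (T i)) ∧
  (∀ i j, i ≠ j → Disjoint ((T i).edgeSet) ((T j).edgeSet)) ∧
  (∀ i j, i ≠ j → InternallyDisjointPaths (T i) (T j))


namespace CISTAux

variable {V : Type*} {T : SimpleGraph V}

noncomputable def tp (hT : T.IsTree) (y z : V) : T.Walk y z :=
  (hT.existsUnique_path y z).exists.choose

lemma tp_isPath (hT : T.IsTree) (y z : V) : (tp hT y z).IsPath :=
  (hT.existsUnique_path y z).exists.choose_spec

lemma tp_unique (hT : T.IsTree) {y z : V} (p : T.Walk y z) (hp : p.IsPath) :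
    p = tp hT y z :=
  (hT.existsUnique_path y z).unique hp (tp_isPath hT y z)

lemma tp_support_subset (hT : T.IsTree) {y z : V} (w : T.Walk y z) :
    (tp hT y z).support ⊆ w.support := by
  classical
  have h : w.bypass = tp hT y z := tp_unique hT w.bypass w.bypass_isPath
  rw [← h]; exact w.support_bypass_subset

lemma tp_self (hT : T.IsTree) (y : V) : tp hT y y = Walk.nil :=
  (tp_unique hT Walk.nil (by simp)).symm

lemma tp_mem_or (hT : T.IsTree) {x y w : V} (z : V) (h : x ∈ (tp hT y w).support) :
    x ∈ (tp hT y z).support ∨ x ∈ (tp hT z w).support := by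
  have h2 := tp_support_subset hT ((tp hT y z).append (tp hT z w)) h
  rwa [Walk.mem_support_append_iff] at h2

lemma tp_mem_symm (hT : T.IsTree) {x y z : V} (h : x ∈ (tp hT y z).support) :
    x ∈ (tp hT z y).support := by
  have h2 : (tp hT y z).reverse = tp hT z y := tp_unique hT _ (tp_isPath hT y z).reverse
  rw [← h2, Walk.support_reverse, List.mem_reverse]; exact h

lemma tp_suffix (hT : T.IsTree) {w z y : V} (hy : y ∈ (tp hT w z).support) :
    (tp hT y z).support ⊆ (tp hT w z).support := by
  obtain ⟨q, r, hqr⟩ := Walk.mem_support_iff_exists_append.mp hy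
  intro x hx
  rw [hqr, Walk.mem_support_append_iff]
  exact Or.inr (tp_support_subset hT r hx)

lemma exists_step (hT : T.IsTree) {u d : V} (h : u ≠ d) :
    ∃ v, T.Adj u v ∧ (tp hT u d).support = u :: (tp hT v d).support ∧
      u ∉ (tp hT v d).support ∧ (tp hT u d).length = (tp hT v d).length + 1 := by
  have hp := tp_isPath hT u d
  rcases h' : tp hT u d with _ | ⟨ha, q⟩
  · exact absurd rfl h
  · rw [h', Walk.cons_isPath_iff] at hp
    have hq : q = tp hT _ d := tp_unique hT q hp.1
    refine ⟨_, ha, ?_, ?_, ?_⟩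
    · rw [← hq]; simp
    · rw [← hq]; exact hp.2
    · rw [← hq]; simp

noncomputable def par (hT : T.IsTree) (d u : V) : V :=
  letI := Classical.dec (u = d)
  if h : u = d then u else (exists_step hT h).choose

lemma par_eq (hT : T.IsTree) {d u : V} (h : u ≠ d) :
    par hT d u = (exists_step hT h).choose := by
  unfold par; exact dif_neg h

lemma par_adj (hT : T.IsTree) {d u : V} (h : u ≠ d) : T.Adj u (par hT d u) := by
  rw [par_eq hT h]
  exact (exists_step hT h).choose_spec.1

lemma par_support (hT : T.IsTree) {d u : V} (h : u ≠ d) :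
    (tp hT u d).support = u :: (tp hT (par hT d u) d).support := by
  rw [par_eq hT h]
  exact (exists_step hT h).choose_spec.2.1

lemma par_not_mem (hT : T.IsTree) {d u : V} (h : u ≠ d) :
    u ∉ (tp hT (par hT d u) d).support := by
  rw [par_eq hT h]
  exact (exists_step hT h).choose_spec.2.2.1

lemma par_length (hT : T.IsTree) {d u : V} (h : u ≠ d) :
    (tp hT u d).length = (tp hT (par hT d u) d).length + 1 := by
  rw [par_eq hT h]
  exact (exists_step hT h).choose_spec.2.2.2

lemma par_mem (hT : T.IsTree) {d u : V} (h : u ≠ d) :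
    par hT d u ∈ (tp hT u d).support := by
  rw [par_support hT h]
  exact List.mem_cons_of_mem _ (Walk.start_mem_support _)

/-- `x` is an internal (non-leaf) vertex of `T`. -/
def Internal (T : SimpleGraph V) (x : V) : Prop :=
  ∃ a b, T.Adj x a ∧ T.Adj x b ∧ a ≠ b


lemma no_common_internal {T₁ T₂ : SimpleGraph V} (hT₁ : T₁.IsTree) (hT₂ : T₂.IsTree)
    (hind : InternallyDisjointPaths T₁ T₂) (x : V) :
    ¬ (Internal T₁ x ∧ Internal T₂ x) := by
  rintro ⟨⟨a₁, b₁, ha₁, hb₁, hab₁⟩, ⟨a₂, b₂, ha₂, hb₂, hab₂⟩⟩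
  have contra : ∀ s t : V, x ≠ s → x ≠ t → x ∈ (tp hT₁ s t).support →
      x ∈ (tp hT₂ s t).support → False := by
    intro s t hs ht h1 h2
    rcases hind s t (tp hT₁ s t) (tp hT₂ s t) (tp_isPath _ _ _) (tp_isPath _ _ _) x h1 h2 with
      h | h
    exacts [hs h, ht h]
  have mem_nbrs : ∀ (T : SimpleGraph V) (hT : T.IsTree) (a b : V), T.Adj x a → T.Adj x b →
      a ≠ b → x ∈ (tp hT a b).support := by
    intro T hT a b ha hb hab
    have hpath : (Walk.cons ha.symm (Walk.cons hb Walk.nil) : T.Walk a b).IsPath := by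
      rw [Walk.isPath_def]
      simp [ha.ne', hb.ne, hab]
    have he := tp_unique hT _ hpath
    rw [← he]; simp
  have mem1 : x ∈ (tp hT₁ a₁ b₁).support := mem_nbrs T₁ hT₁ a₁ b₁ ha₁ hb₁ hab₁
  have mem2 : x ∈ (tp hT₂ a₂ b₂).support := mem_nbrs T₂ hT₂ a₂ b₂ ha₂ hb₂ hab₂
  by_cases hn : x ∈ (tp hT₂ a₁ b₁).support
  · exact contra a₁ b₁ ha₁.ne hb₁.ne mem1 hn
  rcases tp_mem_or hT₂ a₁ mem2 with h2a | h2b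
  · -- x ∈ tp₂ a₂ a₁
    have h2ab1 : x ∈ (tp hT₂ a₂ b₁).support := by
      rcases tp_mem_or hT₂ b₁ h2a with h | h
      · exact h
      · exact absurd (tp_mem_symm hT₂ h) hn
    rcases tp_mem_or hT₁ a₂ mem1 with h | h
    · exact contra a₁ a₂ ha₁.ne ha₂.ne h (tp_mem_symm hT₂ h2a)
    · exact contra a₂ b₁ ha₂.ne hb₁.ne h h2ab1
  · -- x ∈ tp₂ a₁ b₂
    have h2bb1 : x ∈ (tp hT₂ b₂ b₁).support := by
      rcases tp_mem_or hT₂ b₁ (tp_mem_symm hT₂ h2b) with h | h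
      · exact h
      · exact absurd (tp_mem_symm hT₂ h) hn
    rcases tp_mem_or hT₁ b₂ mem1 with h | h
    · exact contra a₁ b₂ ha₁.ne hb₂.ne h h2b
    · exact contra b₂ b₁ hb₂.ne hb₁.ne h h2bb1

variable {T₁ T₂ : SimpleGraph V}

/-- The routing arcs: a vertex internal in `T₂` forwards to its `T₂`-parent,
any other vertex forwards to its `T₁`-parent (both trees rooted at `d`). -/
def rarc (hT₁ : T₁.IsTree) (hT₂ : T₂.IsTree) (d : V) : V → V → Prop :=
  fun u v => u ≠ d ∧
    ((Internal T₂ u ∧ v = par hT₂ d u) ∨ (¬ Internal T₂ u ∧ v = par hT₁ d u))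

lemma clos2 (hT₂ : T₂.IsTree) {d u : V} (h : u ≠ d) :
    Internal T₂ (par hT₂ d u) ∨ par hT₂ d u = d := by
  by_cases h' : par hT₂ d u = d
  · exact Or.inr h'
  · refine Or.inl ⟨u, par hT₂ d (par hT₂ d u), (par_adj hT₂ h).symm, par_adj hT₂ h', ?_⟩
    intro he
    have hm := par_mem hT₂ h'
    rw [← he] at hm
    exact par_not_mem hT₂ h hm

lemma clos1 (hT₁ : T₁.IsTree) (hT₂ : T₂.IsTree)
    (hind : InternallyDisjointPaths T₁ T₂) {d u : V} (h : u ≠ d) :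
    ¬ Internal T₂ (par hT₁ d u) ∨ par hT₁ d u = d := by
  by_cases h' : par hT₁ d u = d
  · exact Or.inr h'
  · refine Or.inl fun hI2 => no_common_internal hT₁ hT₂ hind (par hT₁ d u)
      ⟨⟨u, par hT₁ d (par hT₁ d u), (par_adj hT₁ h).symm, par_adj hT₁ h', ?_⟩, hI2⟩
    intro he
    have hm := par_mem hT₁ h'
    rw [← he] at hm
    exact par_not_mem hT₁ h hm

lemma orbit2 (hT₁ : T₁.IsTree) (hT₂ : T₂.IsTree) {d w x : V}
    (hw : Internal T₂ w ∨ w = d)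
    (h : Relation.ReflTransGen (rarc hT₁ hT₂ d) w x) :
    x ∈ (tp hT₂ w d).support ∧ (Internal T₂ x ∨ x = d) := by
  induction h with
  | refl => exact ⟨Walk.start_mem_support _, hw⟩
  | tail hab hbc ih =>
    obtain ⟨hbd, hcase⟩ := hbc
    have hIb := ih.2.resolve_right hbd
    rcases hcase with ⟨_, rfl⟩ | ⟨hn, _⟩
    · exact ⟨tp_suffix hT₂ ih.1 (par_mem hT₂ hbd), clos2 hT₂ hbd⟩
    · exact absurd hIb hn

lemma orbit1 (hT₁ : T₁.IsTree) (hT₂ : T₂.IsTree)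
    (hind : InternallyDisjointPaths T₁ T₂) {d w x : V}
    (hw : ¬ Internal T₂ w ∨ w = d)
    (h : Relation.ReflTransGen (rarc hT₁ hT₂ d) w x) :
    x ∈ (tp hT₁ w d).support ∧ (¬ Internal T₂ x ∨ x = d) := by
  induction h with
  | refl => exact ⟨Walk.start_mem_support _, hw⟩
  | tail hab hbc ih =>
    obtain ⟨hbd, hcase⟩ := hbc
    have hIb := ih.2.resolve_right hbd
    rcases hcase with ⟨hI, _⟩ | ⟨_, rfl⟩
    · exact absurd hI hIb
    · exact ⟨tp_suffix hT₁ ih.1 (par_mem hT₁ hbd), clos1 hT₁ hT₂ hind hbd⟩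

noncomputable def msr (hT₁ : T₁.IsTree) (hT₂ : T₂.IsTree) (d u : V) : ℕ :=
  letI := Classical.dec (Internal T₂ u)
  if Internal T₂ u then (tp hT₂ u d).length else (tp hT₁ u d).length

lemma msr_eq_pos (hT₁ : T₁.IsTree) (hT₂ : T₂.IsTree) (d : V) {u : V}
    (h : Internal T₂ u) : msr hT₁ hT₂ d u = (tp hT₂ u d).length := by
  unfold msr; exact if_pos h

lemma msr_eq_neg (hT₁ : T₁.IsTree) (hT₂ : T₂.IsTree) (d : V) {u : V}
    (h : ¬ Internal T₂ u) : msr hT₁ hT₂ d u = (tp hT₁ u d).length := by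
  unfold msr; exact if_neg h

lemma msr_d (hT₁ : T₁.IsTree) (hT₂ : T₂.IsTree) (d : V) : msr hT₁ hT₂ d d = 0 := by
  rcases Classical.em (Internal T₂ d) with h | h
  · rw [msr_eq_pos hT₁ hT₂ d h, tp_self]; rfl
  · rw [msr_eq_neg hT₁ hT₂ d h, tp_self]; rfl

lemma msr_lt (hT₁ : T₁.IsTree) (hT₂ : T₂.IsTree)
    (hind : InternallyDisjointPaths T₁ T₂) {d u v : V}
    (h : rarc hT₁ hT₂ d u v) : msr hT₁ hT₂ d v < msr hT₁ hT₂ d u := by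
  obtain ⟨hud, hcase⟩ := h
  rcases hcase with ⟨hI, rfl⟩ | ⟨hnI, rfl⟩
  · rw [msr_eq_pos hT₁ hT₂ d hI, par_length hT₂ hud]
    rcases clos2 hT₂ hud with hI' | hd'
    · rw [msr_eq_pos hT₁ hT₂ d hI']; omega
    · rw [hd', msr_d]; omega
  · rw [msr_eq_neg hT₁ hT₂ d hnI, par_length hT₁ hud]
    rcases clos1 hT₁ hT₂ hind hud with hI' | hd'
    · rw [msr_eq_neg hT₁ hT₂ d hI']; omega
    · rw [hd', msr_d]; omega

lemma rarc_acyclic (hT₁ : T₁.IsTree) (hT₂ : T₂.IsTree)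
    (hind : InternallyDisjointPaths T₁ T₂) (d u : V) :
    ¬ Relation.TransGen (rarc hT₁ hT₂ d) u u := by
  intro h
  have key : ∀ a b : V, Relation.TransGen (rarc hT₁ hT₂ d) a b →
      msr hT₁ hT₂ d b < msr hT₁ hT₂ d a := by
    intro a b hab
    induction hab with
    | single h1 => exact msr_lt hT₁ hT₂ hind h1
    | tail _ h1 ih => exact lt_trans (msr_lt hT₁ hT₂ hind h1) ih
  exact lt_irrefl _ (key u u h)

end CISTAux


/-- A routing with destination `d` on the graph `G`: a directed acyclic graph whose
arcs, viewed as undirected edges, lie in `E(G)`, in which every vertex `u ≠ d` has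
exactly one outgoing arc (pointing to its primary next-hop) and `d` has no outgoing
arc. -/
structure Routing {V : Type*} (G : SimpleGraph V) (d : V) where
  /-- the arcs (directed links) of the routing -/
  arc : V → V → Prop
  arc_adj : ∀ ⦃u v⦄, arc u v → G.Adj u v
  out_unique : ∀ u, u ≠ d → ∃! v, arc u v
  dest_no_out : ∀ v, ¬ arc d v
  acyclic : ∀ u, ¬ Relation.TransGen arc u u

/-- The arcs of the routing after the failure of the vertex `f`. -/
def arcMinusVertex {V : Type*} {G : SimpleGraph V} {d : V} (R : Routing G d)
    (f : V) : V → V → Prop :=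
  fun a b => R.arc a b ∧ a ≠ f ∧ b ≠ f

/-- The arcs of the routing after the failure of the edge `e`. -/
def arcMinusEdge {V : Type*} {G : SimpleGraph V} {d : V} (R : Routing G d)
    (e : Sym2 V) : V → V → Prop :=
  fun a b => R.arc a b ∧ s(a, b) ≠ e

/-- `u` survives the failure of the vertex `f` in the routing `R`: some vertex `w`
adjacent to `u` in `G − f` is not in the upstream of `u` in `R − f`, and `w` and all
vertices reachable from `w` in `R − f`, other than `d`, still have an outgoing
primary arc in `R − f`. -/
def ProtectedAgainstVertexFailure {V : Type*} (G : SimpleGraph V) (d : V)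
    (R : Routing G d) (u f : V) : Prop :=
  ∃ w : V, (G.Adj u w ∧ u ≠ f ∧ w ≠ f) ∧
    (¬ Relation.ReflTransGen (arcMinusVertex R f) w u) ∧
    (∀ x, Relation.ReflTransGen (arcMinusVertex R f) w x → x ≠ d →
      ∃ y, arcMinusVertex R f x y)

/-- `u` survives the failure of the edge `e` in the routing `R`. -/
def ProtectedAgainstEdgeFailure {V : Type*} (G : SimpleGraph V) (d : V)
    (R : Routing G d) (u : V) (e : Sym2 V) : Prop :=
  ∃ w : V, (G.Adj u w ∧ s(u, w) ≠ e) ∧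
    (¬ Relation.ReflTransGen (arcMinusEdge R e) w u) ∧
    (∀ x, Relation.ReflTransGen (arcMinusEdge R e) w x → x ≠ d →
      ∃ y, arcMinusEdge R e x y)

/-- A vertex `u ≠ d` is protected in `R`: for each single failure equal to the
primary next-hop `pnh(u)` (when it is not `d` itself) or to the primary link
`pl(u)`, packets from `u` can be rerouted. -/
def IsProtectedVertex {V : Type*} (G : SimpleGraph V) (d : V) (R : Routing G d)
    (u : V) : Prop :=
  ∀ v : V, R.arc u v →
    (v ≠ d → ProtectedAgainstVertexFailure G d R u v) ∧
    ProtectedAgainstEdgeFailure G d R u s(u, v)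

/-- `R` is a protection routing if every vertex `u ≠ d` is protected in it. -/
def IsProtectionRouting {V : Type*} (G : SimpleGraph V) (d : V)
    (R : Routing G d) : Prop :=
  ∀ u : V, u ≠ d → IsProtectedVertex G d R u

/-- If a connected graph `G` possesses a dual-CIST (two completely independent
spanning trees), then `G` is protectable: for every destination vertex `d` there
exists a protection routing for `G`. -/
theorem protectable_of_dual_cist {V : Type*} {G : SimpleGraph V}
    (hG : G.Connected) {T₁ T₂ : SimpleGraph V}
    (h₁ : IsSpanningTreeOf G T₁) (h₂ : IsSpanningTreeOf G T₂)
    (hdisj : Disjoint T₁.edgeSet T₂.edgeSet)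
    (hind : InternallyDisjointPaths T₁ T₂) :
    ∀ d : V, ∃ R : Routing G d, IsProtectionRouting G d R := by
  
  intro d
  obtain ⟨hle₁, hT₁⟩ := h₁
  obtain ⟨hle₂, hT₂⟩ := h₂
  let R : Routing G d :=
    { arc := CISTAux.rarc hT₁ hT₂ d
      arc_adj := by
        rintro u v ⟨hud, ⟨_, rfl⟩ | ⟨_, rfl⟩⟩
        · exact hle₂ (CISTAux.par_adj hT₂ hud)
        · exact hle₁ (CISTAux.par_adj hT₁ hud)
      out_unique := by
        intro u hud
        by_cases hA : CISTAux.Internal T₂ u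
        · refine ⟨CISTAux.par hT₂ d u, ⟨hud, Or.inl ⟨hA, rfl⟩⟩, ?_⟩
          rintro y ⟨_, ⟨_, rfl⟩ | ⟨hnA, _⟩⟩
          · rfl
          · exact absurd hA hnA
        · refine ⟨CISTAux.par hT₁ d u, ⟨hud, Or.inr ⟨hA, rfl⟩⟩, ?_⟩
          rintro y ⟨_, ⟨hA', rfl⟩ | ⟨_, rfl⟩⟩
          · exact absurd hA' hA
          · rfl
      dest_no_out := by rintro v ⟨h, -⟩; exact h rfl
      acyclic := CISTAux.rarc_acyclic hT₁ hT₂ hind d }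
  refine ⟨R, ?_⟩
  intro u hud v harc
  have harc' : CISTAux.rarc hT₁ hT₂ d u v := harc
  obtain ⟨-, hcase⟩ := harc'
  rcases hcase with ⟨hA, rfl⟩ | ⟨hnA, rfl⟩
  · -- `u` is internal in `T₂`; primary next-hop is the `T₂`-parent, alternate is the `T₁`-parent
    have hwadj : G.Adj u (CISTAux.par hT₁ d u) := hle₁ (CISTAux.par_adj hT₁ hud)
    have hwstat : ¬ CISTAux.Internal T₂ (CISTAux.par hT₁ d u) ∨ CISTAux.par hT₁ d u = d :=
      CISTAux.clos1 hT₁ hT₂ hind hud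
    have hunot : u ∉ (CISTAux.tp hT₁ (CISTAux.par hT₁ d u) d).support :=
      CISTAux.par_not_mem hT₁ hud
    have hsupp : (CISTAux.tp hT₁ u d).support
        = u :: (CISTAux.tp hT₁ (CISTAux.par hT₁ d u) d).support :=
      CISTAux.par_support hT₁ hud
    have hreach : ∀ x, Relation.ReflTransGen (CISTAux.rarc hT₁ hT₂ d) (CISTAux.par hT₁ d u) x →
        x ∈ (CISTAux.tp hT₁ (CISTAux.par hT₁ d u) d).support ∧
          (¬ CISTAux.Internal T₂ x ∨ x = d) :=
      fun x hx => CISTAux.orbit1 hT₁ hT₂ hind hwstat hx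
    have hdif : ∀ a b : V, T₁.Adj a b → s(a, b) ≠ s(u, CISTAux.par hT₂ d u) := by
      intro a b hab he
      have h1 : s(a, b) ∈ T₁.edgeSet := (SimpleGraph.mem_edgeSet _).mpr hab
      have h2 : s(u, CISTAux.par hT₂ d u) ∈ T₂.edgeSet :=
        (SimpleGraph.mem_edgeSet _).mpr (CISTAux.par_adj hT₂ hud)
      rw [he] at h1
      exact Set.disjoint_left.mp hdisj h1 h2
    constructor
    · intro hvd
      have hvnot : CISTAux.par hT₂ d u ∉ (CISTAux.tp hT₁ u d).support := by
        intro hvmem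
        rcases hind u d (CISTAux.tp hT₁ u d) (CISTAux.tp hT₂ u d)
          (CISTAux.tp_isPath _ _ _) (CISTAux.tp_isPath _ _ _) _ hvmem
          (CISTAux.par_mem hT₂ hud) with h | h
        · exact (CISTAux.par_adj hT₂ hud).ne' h
        · exact hvd h
      have hvnot' : CISTAux.par hT₂ d u ∉ (CISTAux.tp hT₁ (CISTAux.par hT₁ d u) d).support :=
        fun hm => hvnot (by rw [hsupp]; exact List.mem_cons_of_mem _ hm)
      refine ⟨CISTAux.par hT₁ d u, ⟨hwadj, (CISTAux.par_adj hT₂ hud).ne, ?_⟩, ?_, ?_⟩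
      · intro he
        apply hvnot'
        rw [← he]
        exact SimpleGraph.Walk.start_mem_support _
      · intro hR
        exact hunot (hreach u (by refine Relation.ReflTransGen.mono ?_ _ _ hR; exact fun a b hab => hab.1)).1
      · intro x hx hxd
        have hx' := hreach x (by refine Relation.ReflTransGen.mono ?_ _ _ hx; exact fun a b hab => hab.1)
        have hnAx : ¬ CISTAux.Internal T₂ x := hx'.2.resolve_right hxd
        refine ⟨CISTAux.par hT₁ d x, ⟨⟨hxd, Or.inr ⟨hnAx, rfl⟩⟩, ?_, ?_⟩⟩
        · exact fun he => hvnot' (he ▸ hx'.1)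
        · exact fun he =>
            hvnot' (he ▸ CISTAux.tp_suffix hT₁ hx'.1 (CISTAux.par_mem hT₁ hxd))
    · refine ⟨CISTAux.par hT₁ d u, ⟨hwadj, hdif u _ (CISTAux.par_adj hT₁ hud)⟩, ?_, ?_⟩
      · intro hR
        exact hunot (hreach u (by refine Relation.ReflTransGen.mono ?_ _ _ hR; exact fun a b hab => hab.1)).1
      · intro x hx hxd
        have hx' := hreach x (by refine Relation.ReflTransGen.mono ?_ _ _ hx; exact fun a b hab => hab.1)
        have hnAx : ¬ CISTAux.Internal T₂ x := hx'.2.resolve_right hxd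
        exact ⟨CISTAux.par hT₁ d x, ⟨hxd, Or.inr ⟨hnAx, rfl⟩⟩,
          hdif x _ (CISTAux.par_adj hT₁ hxd)⟩
  · -- `u` is not internal in `T₂`; primary next-hop is the `T₁`-parent, alternate the `T₂`-parent
    have hwadj : G.Adj u (CISTAux.par hT₂ d u) := hle₂ (CISTAux.par_adj hT₂ hud)
    have hwstat : CISTAux.Internal T₂ (CISTAux.par hT₂ d u) ∨ CISTAux.par hT₂ d u = d :=
      CISTAux.clos2 hT₂ hud
    have hunot : u ∉ (CISTAux.tp hT₂ (CISTAux.par hT₂ d u) d).support :=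
      CISTAux.par_not_mem hT₂ hud
    have hsupp : (CISTAux.tp hT₂ u d).support
        = u :: (CISTAux.tp hT₂ (CISTAux.par hT₂ d u) d).support :=
      CISTAux.par_support hT₂ hud
    have hreach : ∀ x, Relation.ReflTransGen (CISTAux.rarc hT₁ hT₂ d) (CISTAux.par hT₂ d u) x →
        x ∈ (CISTAux.tp hT₂ (CISTAux.par hT₂ d u) d).support ∧
          (CISTAux.Internal T₂ x ∨ x = d) :=
      fun x hx => CISTAux.orbit2 hT₁ hT₂ hwstat hx
    have hdif : ∀ a b : V, T₂.Adj a b → s(a, b) ≠ s(u, CISTAux.par hT₁ d u) := by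
      intro a b hab he
      have h1 : s(a, b) ∈ T₂.edgeSet := (SimpleGraph.mem_edgeSet _).mpr hab
      have h2 : s(u, CISTAux.par hT₁ d u) ∈ T₁.edgeSet :=
        (SimpleGraph.mem_edgeSet _).mpr (CISTAux.par_adj hT₁ hud)
      rw [he] at h1
      exact Set.disjoint_left.mp hdisj h2 h1
    constructor
    · intro hvd
      have hvnot : CISTAux.par hT₁ d u ∉ (CISTAux.tp hT₂ u d).support := by
        intro hvmem
        rcases hind u d (CISTAux.tp hT₁ u d) (CISTAux.tp hT₂ u d)
          (CISTAux.tp_isPath _ _ _) (CISTAux.tp_isPath _ _ _) _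
          (CISTAux.par_mem hT₁ hud) hvmem with h | h
        · exact (CISTAux.par_adj hT₁ hud).ne' h
        · exact hvd h
      have hvnot' : CISTAux.par hT₁ d u ∉ (CISTAux.tp hT₂ (CISTAux.par hT₂ d u) d).support :=
        fun hm => hvnot (by rw [hsupp]; exact List.mem_cons_of_mem _ hm)
      refine ⟨CISTAux.par hT₂ d u, ⟨hwadj, (CISTAux.par_adj hT₁ hud).ne, ?_⟩, ?_, ?_⟩
      · intro he
        apply hvnot'
        rw [← he]
        exact SimpleGraph.Walk.start_mem_support _
      · intro hR
        exact hunot (hreach u (by refine Relation.ReflTransGen.mono ?_ _ _ hR; exact fun a b hab => hab.1)).1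
      · intro x hx hxd
        have hx' := hreach x (by refine Relation.ReflTransGen.mono ?_ _ _ hx; exact fun a b hab => hab.1)
        have hAx : CISTAux.Internal T₂ x := hx'.2.resolve_right hxd
        refine ⟨CISTAux.par hT₂ d x, ⟨⟨hxd, Or.inl ⟨hAx, rfl⟩⟩, ?_, ?_⟩⟩
        · exact fun he => hvnot' (he ▸ hx'.1)
        · exact fun he =>
            hvnot' (he ▸ CISTAux.tp_suffix hT₂ hx'.1 (CISTAux.par_mem hT₂ hxd))
    · refine ⟨CISTAux.par hT₂ d u, ⟨hwadj, hdif u _ (CISTAux.par_adj hT₂ hud)⟩, ?_, ?_⟩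
      · intro hR
        exact hunot (hreach u (by refine Relation.ReflTransGen.mono ?_ _ _ hR; exact fun a b hab => hab.1)).1
      · intro x hx hxd
        have hx' := hreach x (by refine Relation.ReflTransGen.mono ?_ _ _ hx; exact fun a b hab => hab.1)
        have hAx : CISTAux.Internal T₂ x := hx'.2.resolve_right hxd
        exact ⟨CISTAux.par hT₂ d x, ⟨hxd, Or.inl ⟨hAx, rfl⟩⟩,
          hdif x _ (CISTAux.par_adj hT₂ hxd)⟩
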